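/- arXiv:1612.06563 — 2 statements merged into one kernel-verified Lean document; each statement's English description precedes it below -/
import Mathlib

section
/- For every positive integer i, one has the identity of formal power series h(t)^i = ∑_{j=1}^{i} g_{i−1,j}(t)·D^{j−1}g(t) + (1/2)·(−1)^i·t^i in ℚ⟦t⟧. -/
open Polynomial PowerSeries

/-- The polynomials `f_{m,i}(t)` defined recursively. -/
noncomputable def fmi : ℕ → ℕ → Polynomial ℚ
  | 0, 0 => Polynomial.C (1/2) * Polynomial.X - 1
  | 0, 1 => 1
  | 0, _ + 2 => 0
  | m + 1, 0 => Polynomial.X * Polynomial.derivative (fmi m 0)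
  | m + 1, i + 1 =>
    if i = m + 1 then -((m : ℚ) + 1) • fmi m (m + 1)
    else if i + 1 ≤ m + 1 then
      Polynomial.X * Polynomial.derivative (fmi m (i + 1))
        + Polynomial.C ((i : ℚ) + 1) * (1 - Polynomial.X) * fmi m (i + 1)
        - Polynomial.C (i : ℚ) * fmi m i
    else 0

/-- The polynomials `g_{m,i}(t)` defined recursively. -/
noncomputable def gmi : ℕ → ℕ → Polynomial ℚ
  | m, i =>
    if i = m + 1 then Polynomial.C ((-1 : ℚ) ^ m / m.factorial)
    else if h : 1 ≤ i ∧ i ≤ m then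
      Polynomial.C ((-1 : ℚ) ^ (m + 1) / m.factorial) *
        ∑ j ∈ (Finset.Icc i m).attach, fmi m j.1 * gmi (j.1 - 1) i
    else 0
  termination_by m i => m
  decreasing_by
    have hj := Finset.mem_Icc.mp j.2
    omega

/-- The Bernoulli generating series `h(t) = t/(e^t - 1)`. -/
noncomputable def hps : PowerSeries ℚ := bernoulliPowerSeries ℚ

/-- `f(t) = h(t) - 1 + t/2`. -/
noncomputable def fps : PowerSeries ℚ :=
  hps - 1 + PowerSeries.C (R := ℚ) (1/2) * PowerSeries.X

/-- `g(t) = h(t) + t/2`. -/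
noncomputable def gps : PowerSeries ℚ :=
  hps + PowerSeries.C (R := ℚ) (1/2) * PowerSeries.X

/-- The derivation `D = t·(d/dt)` on `ℚ⟦t⟧`. -/
noncomputable def Dop (φ : PowerSeries ℚ) : PowerSeries ℚ :=
  PowerSeries.X * φ.derivativeFun

/-! The Bernoulli series solves the Riccati equation `D h = h - t h - h²` (apply `D` to
`h (eᵗ - 1) = t`), and so does `-t`. For every solution `y`, the recursion defining `f_{m,i}` is
exactly what makes `D^m y = ∑_{i=1}^{m+1} f_{m,i} y^i`. Subtracting half of this identity for
`y = -t` from the one for `y = h` gives `∑_{i=1}^{m+1} f_{m,i} φ_i = D^m g` with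
`φ_i = h^i - (1/2)(-t)^i`: a triangular system with diagonal `f_{m,m+1} = (-1)^m m!`, whose inverse
matrix has entries `g_{m,j}`. -/

open Finset

theorem fmi_eq_zero_of_lt {m i : ℕ} (h : m + 1 < i) : fmi m i = 0 := by
  match m, i, h with
  | 0, _ + 2, _ => rw [fmi]
  | m + 1, i + 1, h => rw [fmi, if_neg (by omega), if_neg (by omega)]

theorem fmi_succ_succ (m i : ℕ) :
    fmi (m + 1) (i + 1) = Polynomial.X * derivative (fmi m (i + 1))
      + Polynomial.C ((i : ℚ) + 1) * (1 - Polynomial.X) * fmi m (i + 1)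
      - Polynomial.C (i : ℚ) * fmi m i := by
  rcases lt_trichotomy i (m + 1) with hi | rfl | hi
  · rw [fmi, if_neg hi.ne, if_pos (by omega)]
  · rw [fmi, if_pos rfl, fmi_eq_zero_of_lt (lt_add_one _), Polynomial.smul_eq_C_mul]
    simp only [derivative_zero, mul_zero, add_zero, zero_sub, ← neg_mul, ← C_neg]
    push_cast
    ring
  · rw [fmi_eq_zero_of_lt (by omega), fmi_eq_zero_of_lt (by omega),
      fmi_eq_zero_of_lt (by omega)]
    simp

theorem fmi_succ_self (m : ℕ) : fmi m (m + 1) = Polynomial.C ((-1 : ℚ) ^ m * m.factorial) := by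
  induction m with
  | zero => rw [fmi]; simp
  | succ m ih =>
    rw [fmi_succ_succ, ih, fmi_eq_zero_of_lt (lt_add_one _)]
    simp only [derivative_zero, mul_zero, zero_add, zero_sub, ← C_mul, ← C_neg]
    push_cast [Nat.factorial_succ]
    ring_nf

theorem gmi_succ_self (m : ℕ) : gmi m (m + 1) = Polynomial.C ((-1 : ℚ) ^ m / m.factorial) := by
  rw [gmi, if_pos rfl]

theorem gmi_succ_of_lt {m j : ℕ} (h : j < m) :
    gmi m (j + 1) = Polynomial.C ((-1 : ℚ) ^ (m + 1) / m.factorial) *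
      ∑ i ∈ Ico j m, fmi m (i + 1) * gmi i (j + 1) := by
  rw [gmi, if_neg (by omega), dif_pos ⟨by omega, by omega⟩, sum_attach (Icc (j + 1) m)
    (fun i => fmi m i * gmi (i - 1) (j + 1)), ← Ico_add_one_right_eq_Icc,
    ← sum_Ico_add' (fun i => fmi m i * gmi (i - 1) (j + 1))]
  simp only [Nat.add_sub_cancel]

theorem gmi_succ_self_mul_fmi_succ_self (m : ℕ) : gmi m (m + 1) * fmi m (m + 1) = 1 := by
  rw [gmi_succ_self, fmi_succ_self, ← C_mul, ← C_1]
  congr 1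
  field_simp
  simp [← pow_mul, pow_mul']

theorem fmi_succ_self_mul_gmi {m j : ℕ} (h : j < m) :
    fmi m (m + 1) * gmi m (j + 1) = -∑ i ∈ Ico j m, fmi m (i + 1) * gmi i (j + 1) := by
  have hc : (-1 : ℚ) ^ m * m.factorial * ((-1) ^ (m + 1) / m.factorial) = -1 := by
    field_simp
    rw [← pow_add]
    simp
  rw [gmi_succ_of_lt h, fmi_succ_self, ← mul_assoc, ← C_mul, hc, C_neg, C_1, neg_one_mul]

theorem eq_sum_gmi_smul_of_sum_fmi_smul {M : Type*} [AddCommGroup M] [Module (Polynomial ℚ) M]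
    {φ ψ : ℕ → M} (h : ∀ m, ∑ i ∈ range (m + 1), fmi m (i + 1) • φ i = ψ m)
    (m : ℕ) :
    φ m = ∑ j ∈ range (m + 1), gmi m (j + 1) • ψ j := by
  induction m using Nat.strong_induction_on with
  | _ m ih =>
  have hlower : ∑ i ∈ range m, fmi m (i + 1) • φ i =
      -(fmi m (m + 1) • ∑ j ∈ range m, gmi m (j + 1) • ψ j) :=
    calc ∑ i ∈ range m, fmi m (i + 1) • φ i
        = ∑ i ∈ range m, ∑ j ∈ range (i + 1), (fmi m (i + 1) * gmi i (j + 1)) • ψ j := by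
          refine sum_congr rfl fun i hi => ?_
          simp_rw [ih i (mem_range.1 hi), smul_sum, mul_smul]
      _ = ∑ j ∈ range m, (∑ i ∈ Ico j m, fmi m (i + 1) * gmi i (j + 1)) • ψ j := by
          simp_rw [range_eq_Ico, sum_smul]
          exact (sum_Ico_Ico_comm 0 m fun j i => (fmi m (i + 1) * gmi i (j + 1)) • ψ j).symm
      _ = -(fmi m (m + 1) • ∑ j ∈ range m, gmi m (j + 1) • ψ j) := by
          rw [smul_sum, ← sum_neg_distrib]
          refine sum_congr rfl fun j hj => ?_
          rw [← mul_smul, fmi_succ_self_mul_gmi (mem_range.1 hj), neg_smul, neg_neg]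
  have htop : fmi m (m + 1) • (φ m - ∑ j ∈ range m, gmi m (j + 1) • ψ j) = ψ m := by
    rw [← h m, sum_range_succ, hlower, smul_sub]
    abel
  rw [sum_range_succ, ← htop, smul_smul, gmi_succ_self_mul_fmi_succ_self, one_smul]
  abel

theorem Dop_eq_X_smul_derivative :
    Dop = ⇑(PowerSeries.X (R := ℚ) • PowerSeries.derivative ℚ) := rfl

theorem Dop_coe (p : Polynomial ℚ) :
    Dop p = ((Polynomial.X * Polynomial.derivative p : Polynomial ℚ) : PowerSeries ℚ) := by
  rw [Dop_eq_X_smul_derivative, Derivation.smul_apply, PowerSeries.derivative_coe, smul_eq_mul,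
    Polynomial.coe_mul, Polynomial.coe_X]

theorem Dop_X : Dop PowerSeries.X = PowerSeries.X := by
  simp [Dop_eq_X_smul_derivative]

theorem Dop_hps : Dop hps = hps - PowerSeries.X * hps - hps ^ 2 := by
  have hbern : hps * (exp ℚ - 1) = PowerSeries.X := bernoulliPowerSeries_mul_exp_sub_one ℚ
  have hD := congrArg (PowerSeries.X (R := ℚ) • PowerSeries.derivative ℚ) hbern
  simp only [Derivation.leibniz, Derivation.smul_apply, map_sub, Derivation.map_one_eq_zero,
    PowerSeries.derivative_exp, PowerSeries.derivative_X, smul_eq_mul] at hD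
  have hne : exp ℚ - 1 ≠ 0 := fun h => by
    simpa [coeff_exp] using congrArg (PowerSeries.coeff 1) h
  apply mul_right_cancel₀ hne
  rw [Dop_eq_X_smul_derivative, Derivation.smul_apply, smul_eq_mul]
  linear_combination hD + (hps - 1) * hbern

theorem Dop_neg_X :
    Dop (-PowerSeries.X) =
      -PowerSeries.X - PowerSeries.X * -PowerSeries.X - (-PowerSeries.X) ^ 2 := by
  rw [Dop_eq_X_smul_derivative, map_neg, ← Dop_eq_X_smul_derivative, Dop_X]
  ring

/-- The bracket telescopes when summed over `i`. -/
theorem Dop_fmi_mul_pow {y : PowerSeries ℚ} (hy : Dop y = y - PowerSeries.X * y - y ^ 2)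
    (m i : ℕ) :
    Dop (fmi m (i + 1) * y ^ (i + 1)) = fmi (m + 1) (i + 1) * y ^ (i + 1)
      + ((i : PowerSeries ℚ) * fmi m i * y ^ (i + 1)
        - ((i + 1 : ℕ) : PowerSeries ℚ) * fmi m (i + 1) * y ^ (i + 1 + 1)) := by
  rw [Dop_eq_X_smul_derivative, Derivation.leibniz, Derivation.leibniz_pow,
    ← Dop_eq_X_smul_derivative, hy, Dop_coe, fmi_succ_succ]
  simp only [smul_eq_mul, nsmul_eq_mul, add_tsub_cancel_right, Polynomial.coe_mul,
    Polynomial.coe_sub, Polynomial.coe_add, Polynomial.coe_one, Polynomial.coe_C,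
    Polynomial.coe_X]
  simp only [map_add, map_natCast, map_one]
  push_cast
  ring

theorem Dop_iterate_eq_sum_fmi_mul_pow {y : PowerSeries ℚ}
    (hy : Dop y = y - PowerSeries.X * y - y ^ 2) (m : ℕ) :
    Dop^[m] y = ∑ i ∈ range (m + 1), (fmi m (i + 1) : PowerSeries ℚ) * y ^ (i + 1) := by
  induction m with
  | zero => simp [fmi]
  | succ m ih =>
    have hextend : ∑ i ∈ range (m + 1), (fmi m (i + 1) : PowerSeries ℚ) * y ^ (i + 1) =
        ∑ i ∈ range (m + 2), (fmi m (i + 1) : PowerSeries ℚ) * y ^ (i + 1) := by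
      rw [sum_range_succ _ (m + 1), fmi_eq_zero_of_lt (lt_add_one _), Polynomial.coe_zero,
        zero_mul, add_zero]
    rw [Function.iterate_succ_apply', ih, hextend, Dop_eq_X_smul_derivative, map_sum,
      ← Dop_eq_X_smul_derivative]
    simp_rw [Dop_fmi_mul_pow hy]
    rw [sum_add_distrib, sum_range_sub' (fun i => (i : PowerSeries ℚ) * fmi m i * y ^ (i + 1)),
      fmi_eq_zero_of_lt (show m + 1 < m + 2 by omega)]
    simp

theorem Dop_iterate_add_C_mul_X (a : ℚ) (m : ℕ) (φ : PowerSeries ℚ) :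
    Dop^[m] (φ + PowerSeries.C a * PowerSeries.X) =
      Dop^[m] φ + PowerSeries.C a * PowerSeries.X := by
  refine Function.Commute.iterate_left (g := (· + PowerSeries.C a * PowerSeries.X))
    (fun ψ => ?_) m φ
  simp [Dop_eq_X_smul_derivative, mul_add, mul_comm]

theorem sum_fmi_mul_hps_pow_sub (m : ℕ) :
    ∑ i ∈ range (m + 1), (fmi m (i + 1) : PowerSeries ℚ) *
      (hps ^ (i + 1) - PowerSeries.C ((1 / 2) * (-1) ^ (i + 1)) * PowerSeries.X ^ (i + 1)) =
      Dop^[m] gps := by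
  have hX : Dop^[m] (-PowerSeries.X) = -PowerSeries.X :=
    Function.iterate_fixed (by rw [Dop_neg_X]; ring) m
  calc _ = ∑ i ∈ range (m + 1), (fmi m (i + 1) : PowerSeries ℚ) * hps ^ (i + 1)
        - PowerSeries.C (1 / 2) * ∑ i ∈ range (m + 1),
            (fmi m (i + 1) : PowerSeries ℚ) * (-PowerSeries.X) ^ (i + 1) := by
        rw [mul_sum, ← sum_sub_distrib]
        refine sum_congr rfl fun i _ => ?_
        rw [map_mul, map_pow, map_neg, map_one, neg_pow (PowerSeries.X : PowerSeries ℚ)]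
        ring
    _ = Dop^[m] hps - PowerSeries.C (1 / 2) * Dop^[m] (-PowerSeries.X) := by
        rw [Dop_iterate_eq_sum_fmi_mul_pow Dop_hps, Dop_iterate_eq_sum_fmi_mul_pow Dop_neg_X]
    _ = Dop^[m] gps := by
        rw [hX, gps, Dop_iterate_add_C_mul_X]
        ring

theorem polynomial_smul_eq_coe_mul (p : Polynomial ℚ) (φ : PowerSeries ℚ) :
    p • φ = (p : PowerSeries ℚ) * φ := by
  rw [Algebra.smul_def]
  rfl

theorem h_pow_eq (i : ℕ) (hi : 1 ≤ i) :
    hps ^ i = (∑ j ∈ Finset.Icc 1 i, (gmi (i - 1) j : PowerSeries ℚ) * Dop^[j - 1] gps)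
      + PowerSeries.C (R := ℚ) ((1/2) * (-1) ^ i) * PowerSeries.X ^ i := by
  obtain ⟨m, rfl⟩ := Nat.exists_eq_add_of_le' hi
  have hinv := eq_sum_gmi_smul_of_sum_fmi_smul
    (φ := fun k =>
      hps ^ (k + 1) - PowerSeries.C ((1 / 2) * (-1) ^ (k + 1)) * PowerSeries.X ^ (k + 1))
    (ψ := fun k => Dop^[k] gps)
    (by simpa only [polynomial_smul_eq_coe_mul] using sum_fmi_mul_hps_pow_sub) m
  simp only [polynomial_smul_eq_coe_mul] at hinv
  rw [← Ico_add_one_right_eq_Icc, sum_Ico_eq_sum_range]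
  simp only [add_comm 1, Nat.add_sub_cancel]
  linear_combination hinv
end

section
/- Fix an integer n ≥ 1 and nonnegative integers m_1, …, m_n, and set M = m_1 + ⋯ + m_n. Then f_0(t) = ∏_{j=1}^{n} (t/2 − δ_{m_j,0}), and for every integer i with 0 ≤ i ≤ M + n the polynomial f_i(t) has degree at most M + n − i. -/
open Polynomial PowerSeries

/-- `f_i(t) = ∑ ∏_j f_{m_j, i_j}(t)` over tuples with `∑ i_j = i`, `0 ≤ i_j ≤ m_j + 1`. -/
noncomputable def bigf (n : ℕ) (m : Fin n → ℕ) (i : ℕ) : Polynomial ℚ :=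
  ∑ v ∈ (Fintype.piFinset fun j => Finset.range (m j + 2)).filter
      (fun v => ∑ j, v j = i),
    ∏ j, fmi (m j) (v j)

/-- The polynomials `F_j(t)`. -/
noncomputable def bigF (n : ℕ) (m : Fin n → ℕ) (j : ℕ) : Polynomial ℚ :=
  if j = 0 then
    bigf n m 0 + Polynomial.C (1/2 : ℚ) *
      ∑ i ∈ Finset.Icc 1 ((∑ j, m j) + n),
        ((-1 : ℚ) ^ i) • (bigf n m i * Polynomial.X ^ i)
  else
    ∑ i ∈ Finset.Icc j ((∑ j, m j) + n), bigf n m i * gmi (i - 1) j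

/-- `a_{j,l}` is the coefficient of `t^{2l}` in `F_j(t)`. -/
noncomputable def acoef (n : ℕ) (m : Fin n → ℕ) (j l : ℕ) : ℚ :=
  (bigF n m j).coeff (2 * l)

/-- The set of compositions of `k` into `n` positive parts. -/
noncomputable def comps (n k : ℕ) : Finset (Fin n → ℕ) :=
  (Fintype.piFinset fun _ => Finset.Icc 1 k).filter (fun v => ∑ j, v j = k)

/-!
The Euler operator `t · d/dt` never raises the degree and fixes `t/2` while killing constants,
so `f_{m,0} = t/2 - δ_{m,0}`, and the recursion gives `deg f_{m,i} ≤ m + 1 - i`. Degrees add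
in products and `∑ (m_j + 1 - i_j) = M + n - i`; for `i = 0` only the zero tuple contributes.
-/

namespace Polynomial

theorem natDegree_X_mul_derivative_le {R : Type*} [Semiring R] (p : R[X]) :
    (X * derivative p).natDegree ≤ p.natDegree := by
  rcases eq_or_ne p.natDegree 0 with hp | hp
  · obtain ⟨a, rfl⟩ := natDegree_eq_zero.mp hp
    rw [derivative_C, mul_zero, natDegree_zero]
    exact Nat.zero_le _
  · have hlt := natDegree_derivative_lt hp
    have hX : (X : R[X]).natDegree ≤ 1 := natDegree_X_le
    have := natDegree_mul_le (p := (X : R[X])) (q := derivative p)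
    omega

end Polynomial

open Polynomial

theorem fmi_succ_zero (m : ℕ) : fmi (m + 1) 0 = Polynomial.X * derivative (fmi m 0) := by
  rw [fmi]

theorem fmi_succ_succ_self (m : ℕ) : fmi (m + 1) (m + 2) = -((m : ℚ) + 1) • fmi m (m + 1) := by
  rw [fmi, if_pos rfl]

theorem fmi_succ_succ_of_le {m i : ℕ} (hi : i ≤ m) :
    fmi (m + 1) (i + 1) =
      Polynomial.X * derivative (fmi m (i + 1))
        + Polynomial.C ((i : ℚ) + 1) * (1 - Polynomial.X) * fmi m (i + 1)
        - Polynomial.C (i : ℚ) * fmi m i := by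
  rw [fmi, if_neg (by omega), if_pos (by omega)]

theorem fmi_zero_eq (m : ℕ) :
    fmi m 0 = Polynomial.C (1 / 2 : ℚ) * Polynomial.X - if m = 0 then 1 else 0 := by
  induction m with
  | zero => rw [fmi, if_pos rfl]
  | succ k ih =>
    have hderiv : derivative (fmi k 0) = Polynomial.C (1 / 2 : ℚ) := by
      rw [ih]
      split_ifs <;> simp
    rw [fmi_succ_zero, hderiv, if_neg k.succ_ne_zero, sub_zero, mul_comm]

theorem natDegree_fmi_le (m i : ℕ) : (fmi m i).natDegree ≤ m + 1 - i := by
  induction m generalizing i with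
  | zero =>
    match i with
    | 0 => rw [fmi]; compute_degree!
    | 1 => rw [fmi]; simp
    | i + 2 => rw [fmi]; simp
  | succ k ih =>
    match i with
    | 0 =>
      rw [fmi_succ_zero]
      exact (natDegree_X_mul_derivative_le _).trans ((ih 0).trans (by omega))
    | i + 1 =>
      rcases lt_trichotomy i (k + 1) with hi | rfl | hi
      · rw [fmi_succ_succ_of_le (by omega)]
        have hEuler := (natDegree_X_mul_derivative_le (fmi k (i + 1))).trans (ih (i + 1))
        have hlinear : (Polynomial.C ((i : ℚ) + 1) * (1 - Polynomial.X)).natDegree ≤ 1 := by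
          compute_degree
        have hmid := natDegree_mul_le.trans (add_le_add hlinear (ih (i + 1)))
        have hlast := (natDegree_C_mul_le (i : ℚ) (fmi k i)).trans (ih i)
        refine (natDegree_sub_le _ _).trans (max_le ((natDegree_add_le _ _).trans
          (max_le ?_ ?_)) ?_) <;> omega
      · rw [fmi_succ_succ_self]
        exact (natDegree_smul_le _ _).trans ((ih (k + 1)).trans (by omega))
      · rw [fmi, if_neg hi.ne', if_neg (by omega), natDegree_zero]
        exact Nat.zero_le _

theorem bigf_zero_eq (n : ℕ) (m : Fin n → ℕ) :
    bigf n m 0 = ∏ j, (Polynomial.C (1 / 2 : ℚ) * Polynomial.X - if m j = 0 then 1 else 0) := by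
  have hzero_mem : (0 : Fin n → ℕ) ∈ (Fintype.piFinset fun j => Finset.range (m j + 2)).filter
      (fun v => ∑ j, v j = 0) := by simp
  rw [bigf, Finset.sum_eq_single_of_mem 0 hzero_mem]
  · exact Finset.prod_congr rfl fun j _ => fmi_zero_eq (m j)
  · intro v hv hv0
    simp only [Finset.mem_filter, Finset.sum_eq_zero_iff, Finset.mem_univ, true_implies] at hv
    exact absurd (funext hv.2) hv0

theorem natDegree_bigf_le (n : ℕ) (m : Fin n → ℕ) (i : ℕ) :
    (bigf n m i).natDegree ≤ ∑ j, m j + n - i := by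
  refine natDegree_sum_le_of_forall_le _ _ fun v hv => ?_
  simp only [Finset.mem_filter, Fintype.mem_piFinset, Finset.mem_range] at hv
  obtain ⟨hv_lt, rfl⟩ := hv
  calc (∏ j, fmi (m j) (v j)).natDegree
      ≤ ∑ j, (fmi (m j) (v j)).natDegree := natDegree_prod_le _ _
    _ ≤ ∑ j, (m j + 1 - v j) := Finset.sum_le_sum fun j _ => natDegree_fmi_le _ _
    _ = ∑ j, m j + n - ∑ j, v j := by
      rw [Finset.sum_tsub_distrib _ fun j _ => by have := hv_lt j; omega,
        Finset.sum_add_distrib]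
      simp

theorem bigf_zero_and_degree_general (n : ℕ) (m : Fin n → ℕ) :
    bigf n m 0 = ∏ j, (Polynomial.C (1/2 : ℚ) * Polynomial.X
        - if m j = 0 then 1 else 0) ∧
    ∀ i ≤ (∑ j, m j) + n, (bigf n m i).degree ≤ ((∑ j, m j) + n - i : ℕ) :=
  ⟨bigf_zero_eq n m, fun i _ => natDegree_le_iff_degree_le.mp (natDegree_bigf_le n m i)⟩

theorem bigf_zero_and_degree (n : ℕ) (hn : 1 ≤ n) (m : Fin n → ℕ) :
    bigf n m 0 = ∏ j, (Polynomial.C (1/2 : ℚ) * Polynomial.X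
        - if m j = 0 then 1 else 0) ∧
    ∀ i ≤ (∑ j, m j) + n, (bigf n m i).degree ≤ ((∑ j, m j) + n - i : ℕ) :=
  bigf_zero_and_degree_general n m
end
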